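/- arXiv:2104.12241 — 3 statements merged into one kernel-verified Lean document; each statement's English description precedes it below -/
import Mathlib

section
/- Let 0 < α < 1, β₋ = sqrt(1/α − 1), and γ̃₁(τ) = τ⁴ + 2iβ₋τ² + 1. Then for every τ > 0, the real part of sqrt(1 − α·γ̃₁(τ)) equals sqrt(1 − α), i.e., it is constant along the contour γ̃₁. -/
open Complex

theorem gustafsson_sqrt_re_const (α : ℝ) (hα0 : 0 < α) (hα1 : α < 1) (τ : ℝ) (hτ : 0 < τ) :
    ((1 - (α : ℂ) * ((τ : ℂ) ^ 4 + 2 * Complex.I * (Real.sqrt (1 / α - 1) : ℂ) * (τ : ℂ) ^ 2 + 1))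
        ^ ((1 : ℂ) / 2)).re = Real.sqrt (1 - α) := by
  set β : ℝ := Real.sqrt (1 / α - 1) with hβ
  have hβpos : 0 < β := Real.sqrt_pos.2 (by
    rw [sub_pos, lt_div_iff₀ hα0, one_mul]; exact hα1)
  have hβ2 : β ^ 2 = 1 / α - 1 := Real.sq_sqrt (by
    rw [sub_nonneg, le_div_iff₀ hα0, one_mul]; exact hα1.le)
  have hs2 : (Real.sqrt α) ^ 2 = α := Real.sq_sqrt hα0.le
  set w : ℂ := (Real.sqrt α : ℂ) * ((β : ℂ) - Complex.I * (τ : ℂ) ^ 2) with hw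
  have h1 : ((Real.sqrt α : ℂ)) ^ 2 = (α : ℂ) := by rw [← Complex.ofReal_pow, hs2]
  have h2' : (α : ℂ) * (β : ℂ) ^ 2 = 1 - (α : ℂ) := by
    rw [← Complex.ofReal_pow, ← Complex.ofReal_mul]
    rw [show α * β ^ 2 = 1 - α by rw [hβ2]; field_simp]
    push_cast; ring
  have hz : (1 - (α : ℂ) * ((τ : ℂ) ^ 4 + 2 * Complex.I * (β : ℂ) * (τ : ℂ) ^ 2 + 1))
      = w ^ (2 : ℕ) := by
    rw [hw, mul_pow, h1]
    linear_combination (-1 : ℂ) * h2' + (-(α : ℂ) * (τ : ℂ) ^ 4) * Complex.I_sq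
  have hre : 0 < w.re := by
    have : w.re = Real.sqrt α * β := by
      simp [hw, Complex.mul_re, Complex.sub_re, Complex.sub_im, Complex.mul_im,
        ← Complex.ofReal_pow]
    rw [this]
    positivity
  have key : ((w ^ (2 : ℕ)) ^ ((1 : ℂ) / 2)).re = w.re := by
    rw [one_div, Complex.sq_cpow_two_inv hre]
  rw [hz, key]
  have : w.re = Real.sqrt α * β := by
    simp [hw, Complex.mul_re, Complex.sub_re, Complex.sub_im, Complex.mul_im,
      ← Complex.ofReal_pow]
  rw [this, hβ, ← Real.sqrt_mul hα0.le]
  congr 1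
  field_simp
end

section
/- Let 0 < α < 1. The steepest-descent condition Re(sqrt(1 − α(x + iy))) = sqrt(1 − α), for real x, y with y > 0, is equivalent to x = y²/(4(1/α − 1)) + 1. -/
/-!
Since `Re √w = √((‖w‖ + Re w) / 2)`, for `w = 1 - α(x + iy)` the condition says
`‖w‖ = 1 - 2α + αx`. Squaring, `‖w‖² - (1 - 2α + αx)² = α(αy² - 4(1 - α)(x - 1))`, whose vanishing
is the parabola; on the parabola `1 - 2α + αx = (1 - α) + α(x - 1) ≥ 0`, so squaring loses nothing.
-/

open Complex

lemma Complex.re_cpow_one_div_two (w : ℂ) : (w ^ ((1 : ℂ) / 2)).re = √((‖w‖ + w.re) / 2) := by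
  rw [one_div]
  exact cpow_inv_two_re w

lemma Complex.re_cpow_one_div_two_eq_sqrt_iff (w : ℂ) {c : ℝ} (hc : 0 ≤ c) :
    (w ^ ((1 : ℂ) / 2)).re = √c ↔ ‖w‖ = 2 * c - w.re := by
  have hnonneg : 0 ≤ (‖w‖ + w.re) / 2 := by
    linarith [neg_abs_le w.re, abs_re_le_norm w]
  rw [re_cpow_one_div_two, Real.sqrt_inj hnonneg hc]
  constructor <;> intro h <;> linarith

lemma Complex.norm_eq_iff_normSq_eq (w : ℂ) {t : ℝ} : ‖w‖ = t ↔ normSq w = t ^ 2 ∧ 0 ≤ t := by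
  constructor
  · rintro rfl
    exact ⟨normSq_eq_norm_sq w, norm_nonneg w⟩
  · rintro ⟨h, ht⟩
    rw [norm_def, h, Real.sqrt_sq ht]

lemma eq_parabola_iff_mul_sq_eq {α : ℝ} (hα0 : α ≠ 0) (hα1 : α < 1) (x y : ℝ) :
    x = y ^ 2 / (4 * (1 / α - 1)) + 1 ↔ α * y ^ 2 = 4 * (1 - α) * (x - 1) := by
  have h1 : 1 - α ≠ 0 := by linarith
  rw [show 1 / α - 1 = (1 - α) / α by field_simp]
  constructor <;> intro h
  · rw [h]; field_simp; ring
  · field_simp; linarith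

lemma norm_one_sub_mul_eq_iff_parabola {α : ℝ} (hα0 : α ≠ 0) (hα1 : α < 1) (x y : ℝ) :
    ‖1 - (α : ℂ) * (x + y * I)‖ = 1 - 2 * α + α * x ↔ x = y ^ 2 / (4 * (1 / α - 1)) + 1 := by
  have hnormSq : normSq (1 - (α : ℂ) * (x + y * I)) = (1 - α * x) ^ 2 + (α * y) ^ 2 := by
    simp only [normSq_apply, sub_re, one_re, mul_re, ofReal_re, ofReal_im, add_re, add_im, mul_im,
      I_re, I_im, sub_im, one_im]
    ring
  have hsq : (1 - α * x) ^ 2 + (α * y) ^ 2 = (1 - 2 * α + α * x) ^ 2 ↔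
      α * y ^ 2 = 4 * (1 - α) * (x - 1) := by
    rw [← sub_eq_zero, show (1 - α * x) ^ 2 + (α * y) ^ 2 - (1 - 2 * α + α * x) ^ 2
      = α * (α * y ^ 2 - 4 * (1 - α) * (x - 1)) by ring, mul_eq_zero, or_iff_right hα0, sub_eq_zero]
  rw [norm_eq_iff_normSq_eq, eq_parabola_iff_mul_sq_eq hα0 hα1, hnormSq, hsq, and_iff_left_iff_imp]
  intro h
  have hαx : 0 ≤ α * (x - 1) := by
    refine nonneg_of_mul_nonneg_right (a := 4 * (1 - α)) ?_ (by linarith)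
    rw [show 4 * (1 - α) * (α * (x - 1)) = (α * y) ^ 2 by linear_combination (-α) * h]
    positivity
  linarith

theorem gustafsson_contour_char_general (α : ℝ) (hα0 : 0 < α) (hα1 : α < 1) (x y : ℝ) :
    ((1 - (α : ℂ) * ((x : ℂ) + (y : ℂ) * Complex.I)) ^ ((1 : ℂ) / 2)).re = Real.sqrt (1 - α) ↔
      x = y ^ 2 / (4 * (1 / α - 1)) + 1 := by
  have hre : (1 - (α : ℂ) * ((x : ℂ) + (y : ℂ) * I)).re = 1 - α * x := by simp
  rw [re_cpow_one_div_two_eq_sqrt_iff _ (by linarith), hre,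
    show 2 * (1 - α) - (1 - α * x) = 1 - 2 * α + α * x by ring]
  exact norm_one_sub_mul_eq_iff_parabola hα0.ne' hα1 x y

theorem gustafsson_contour_char (α : ℝ) (hα0 : 0 < α) (hα1 : α < 1) (x y : ℝ) (hy : 0 < y) :
    ((1 - (α : ℂ) * ((x : ℂ) + (y : ℂ) * Complex.I)) ^ ((1 : ℂ) / 2)).re = Real.sqrt (1 - α) ↔
      x = y ^ 2 / (4 * (1 / α - 1)) + 1 :=
  gustafsson_contour_char_general α hα0 hα1 x y
end

section
/- Suppose f : ℂ → ℂ is analytic on an open set containing the closed Bernstein ellipse region E_ρ (ρ > 1) with |f(z)| ≤ M there, and f(x) = Σ_{k≥0} a_k T_k(x) for x ∈ [−1,1]. Then |a_k| ≤ 2M ρ^{−k} for all k ≥ 1. -/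
open Complex

/-- The closed region bounded by the Bernstein ellipse `E_ρ`: the image of the
closed annulus `1 ≤ r ≤ ρ` under the Joukowski map. -/
def bernsteinRegion (ρ : ℝ) : Set ℂ :=
  {w : ℂ | ∃ r : ℝ, ∃ θ : ℝ, 1 ≤ r ∧ r ≤ ρ ∧
    w = ((r : ℂ) * Complex.exp (θ * Complex.I) + (r : ℂ)⁻¹ * Complex.exp (-(θ * Complex.I))) / 2}

/-!
Pulling `f` back along the Joukowski map `J z = (z + z⁻¹) / 2` gives a function holomorphic
near the closed annulus `1 ≤ |z| ≤ ρ`. On the unit circle `J (e^{iθ}) = cos θ` and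
`T_j (cos θ) = cos (jθ)`, so by orthogonality `∮_{|z|=1} f (J z) z^{-k-1} dz = iπ a_k` for `k ≥ 1`.
Cauchy's theorem moves the contour to `|z| = ρ`, where the integrand is at most `M ρ^{-k-1}`
and the circle has length `2πρ`.
-/

open Real MeasureTheory Metric

noncomputable def joukowski (z : ℂ) : ℂ := (z + z⁻¹) / 2

lemma joukowski_mem_bernsteinRegion {ρ : ℝ} {z : ℂ} (h1 : 1 ≤ ‖z‖) (h2 : ‖z‖ ≤ ρ) :
    joukowski z ∈ bernsteinRegion ρ := by
  refine ⟨‖z‖, arg z, h1, h2, ?_⟩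
  rw [Complex.exp_neg, ← mul_inv, norm_mul_exp_arg_mul_I, joukowski]

lemma joukowski_exp_mul_I (θ : ℝ) : joukowski (exp (θ * I)) = Real.cos θ := by
  rw [joukowski, ← Complex.exp_neg, ofReal_cos, Complex.cos]
  ring_nf

lemma differentiableAt_joukowski {z : ℂ} (hz : z ≠ 0) : DifferentiableAt ℂ joukowski z :=
  (differentiableAt_id.add (differentiableAt_inv hz)).div_const 2

lemma integral_exp_int_mul_mul_I (m : ℤ) :
    ∫ θ in (0 : ℝ)..2 * π, exp (m * θ * I) = if m = 0 then (2 * π : ℂ) else 0 := by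
  split_ifs with hm
  · simp [hm]
  · have hc : (m : ℂ) * I ≠ 0 := by simp [hm]
    have h := integral_exp_mul_complex (a := 0) (b := 2 * π) hc
    simp only [mul_right_comm _ I] at h
    rw [h, show (m : ℂ) * ((2 * π : ℝ) : ℂ) * I = m * (2 * π * I) by push_cast; ring,
      exp_int_mul_two_pi_mul_I]
    simp

lemma integral_cos_nat_mul_mul_exp_neg {k : ℕ} (hk : k ≠ 0) (j : ℕ) :
    ∫ θ in (0 : ℝ)..2 * π, Complex.cos (j * θ) * exp (-(k * θ * I))
      = if j = k then (π : ℂ) else 0 := by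
  have hsplit (θ : ℝ) : Complex.cos (j * θ) * exp (-(k * θ * I))
      = (exp (((j - k : ℤ) : ℂ) * θ * I) + exp (((-j - k : ℤ) : ℂ) * θ * I)) / 2 := by
    rw [Complex.cos, div_mul_eq_mul_div, add_mul, ← Complex.exp_add, ← Complex.exp_add]
    push_cast
    ring_nf
  have hint (m : ℤ) : IntervalIntegrable (fun θ : ℝ => exp (m * θ * I)) volume 0 (2 * π) :=
    (by fun_prop : Continuous fun θ : ℝ => exp (m * θ * I)).intervalIntegrable _ _
  simp only [hsplit]
  rw [intervalIntegral.integral_div, intervalIntegral.integral_add (hint _) (hint _),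
    integral_exp_int_mul_mul_I, integral_exp_int_mul_mul_I,
    if_neg (show -(j : ℤ) - k ≠ 0 by omega)]
  by_cases hjk : j = k
  · simp [hjk]
  · simp [hjk, sub_eq_zero]

lemma norm_cos_nat_mul_mul_exp_neg_le (j k : ℕ) (θ : ℝ) :
    ‖Complex.cos (j * θ) * exp (-(k * θ * I))‖ ≤ 1 := by
  have hcos : Complex.cos (j * θ) = Real.cos (j * θ) := by push_cast; rfl
  have hexp : exp (-(k * θ * I)) = exp ((-(k * θ) : ℝ) * I) := by push_cast; ring_nf
  rw [norm_mul, hcos, hexp, norm_exp_ofReal_mul_I, mul_one, norm_real, Real.norm_eq_abs]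
  exact abs_cos_le_one _

lemma integral_mul_exp_neg_of_hasSum_cos {g : ℝ → ℂ} {a : ℕ → ℂ} (ha : Summable (‖a ·‖))
    (hg : ∀ θ : ℝ, HasSum (fun j : ℕ => a j * Complex.cos (j * θ)) (g θ)) {k : ℕ}
    (hk : k ≠ 0) :
    ∫ θ in (0 : ℝ)..2 * π, g θ * exp (-(k * θ * I)) = π * a k := by
  set F : ℕ → ℝ → ℂ := fun j θ => a j * (Complex.cos (j * θ) * exp (-(k * θ * I)))
  have hmeas (j : ℕ) : AEStronglyMeasurable (F j) (volume.restrict (Set.uIoc 0 (2 * π))) :=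
    (by fun_prop : Continuous (F j)).aestronglyMeasurable
  have hbd (j : ℕ) (θ : ℝ) : ‖F j θ‖ ≤ ‖a j‖ := by
    rw [norm_mul]
    exact mul_le_of_le_one_right (norm_nonneg _) (norm_cos_nat_mul_mul_exp_neg_le j k θ)
  have hlim (θ : ℝ) : HasSum (F · θ) (g θ * exp (-(k * θ * I))) := by
    simpa only [F, mul_assoc] using (hg θ).mul_right (exp (-(k * θ * I)))
  have hterms : HasSum (fun j => ∫ θ in (0 : ℝ)..2 * π, F j θ)
      (∫ θ in (0 : ℝ)..2 * π, g θ * exp (-(k * θ * I))) :=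
    intervalIntegral.hasSum_integral_of_dominated_convergence (fun j _ => ‖a j‖) hmeas
      (fun j => .of_forall fun θ _ => hbd j θ) (.of_forall fun _ _ => ha)
      intervalIntegrable_const (.of_forall fun θ _ => hlim θ)
  simp only [F, intervalIntegral.integral_const_mul, integral_cos_nat_mul_mul_exp_neg hk, mul_ite,
    mul_zero] at hterms
  rw [hterms.unique (hasSum_single k fun j hj => if_neg hj), if_pos rfl, mul_comm]

lemma circleIntegral_unit_comp_joukowski_div_pow_succ (f : ℂ → ℂ) (k : ℕ) :
    ∮ z in C(0, 1), f (joukowski z) / z ^ (k + 1)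
      = I * ∫ θ in (0 : ℝ)..2 * π, f (Real.cos θ) * exp (-(k * θ * I)) := by
  rw [circleIntegral, ← intervalIntegral.integral_const_mul]
  refine intervalIntegral.integral_congr fun θ _ => ?_
  simp only [deriv_circleMap, circleMap_zero, ofReal_one, one_mul, joukowski_exp_mul_I,
    smul_eq_mul, div_eq_mul_inv, ← Complex.exp_nat_mul, ← Complex.exp_neg]
  rw [mul_left_comm, mul_comm _ I, mul_assoc I, mul_left_comm _ (f _), ← Complex.exp_add]
  push_cast
  ring_nf

lemma circleIntegral_comp_joukowski_div_pow_eq {ρ : ℝ} (hρ : 1 ≤ ρ) {f : ℂ → ℂ} {U : Set ℂ}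
    (hU : IsOpen U) (hsub : bernsteinRegion ρ ⊆ U) (hf : DifferentiableOn ℂ f U) (n : ℕ) :
    ∮ z in C(0, ρ), f (joukowski z) / z ^ n = ∮ z in C(0, 1), f (joukowski z) / z ^ n := by
  set V : Set ℂ := {0}ᶜ ∩ joukowski ⁻¹' U
  have hV : IsOpen V := ContinuousOn.isOpen_inter_preimage
    (fun z hz => (differentiableAt_joukowski hz).continuousAt.continuousWithinAt)
    isOpen_compl_singleton hU
  have hannulus : closedBall (0 : ℂ) ρ \ ball 0 1 ⊆ V := by
    rintro z ⟨hzρ, hz1⟩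
    rw [mem_closedBall_zero_iff] at hzρ
    rw [mem_ball_zero_iff, not_lt] at hz1
    exact ⟨norm_pos_iff.mp (by linarith), hsub (joukowski_mem_bernsteinRegion hz1 hzρ)⟩
  have hd : DifferentiableOn ℂ (fun z => f (joukowski z) / z ^ n) V := fun z hz =>
    ((hf.differentiableAt (hU.mem_nhds hz.2)).comp z (differentiableAt_joukowski hz.1)
      |>.div (differentiableAt_pow n) (pow_ne_zero n hz.1)).differentiableWithinAt
  refine circleIntegral_eq_of_differentiable_on_annulus_off_countable one_pos hρ
    Set.countable_empty (hd.continuousOn.mono hannulus) fun z hz => ?_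
  refine hd.differentiableAt (hV.mem_nhds (hannulus ⟨ball_subset_closedBall hz.1.1, ?_⟩))
  exact fun h => hz.1.2 (ball_subset_closedBall h)

theorem chebyshev_coeff_decay (ρ : ℝ) (hρ : 1 < ρ) (f : ℂ → ℂ) (M : ℝ)
    (U : Set ℂ) (hU : IsOpen U) (hsub : bernsteinRegion ρ ⊆ U)
    (hf : DifferentiableOn ℂ f U)
    (hbound : ∀ z ∈ bernsteinRegion ρ, ‖f z‖ ≤ M)
    (a : ℕ → ℂ)
    (hsum : ∀ x : ℝ, x ∈ Set.Icc (-1 : ℝ) 1 →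
      HasSum (fun k : ℕ => a k * (Polynomial.Chebyshev.T ℂ k).eval (x : ℂ)) (f x)) :
    ∀ k : ℕ, 1 ≤ k → ‖a k‖ ≤ 2 * M * ρ ^ (-(k : ℤ)) := by
  intro k hk
  have hcos (θ : ℝ) : HasSum (fun j : ℕ => a j * Complex.cos (j * θ)) (f (Real.cos θ)) := by
    simpa [ofReal_cos, Polynomial.Chebyshev.T_complex_cos] using
      hsum (Real.cos θ) ⟨neg_one_le_cos θ, cos_le_one θ⟩
  -- Unconditional summability in `ℂ` is absolute summability.
  have habs : Summable (‖a ·‖) := summable_norm_iff.mpr (by simpa using (hcos 0).summable)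
  have hcontour : ∮ z in C(0, ρ), f (joukowski z) / z ^ (k + 1) = I * (π * a k) := by
    rw [circleIntegral_comp_joukowski_div_pow_eq hρ.le hU hsub hf,
      circleIntegral_unit_comp_joukowski_div_pow_succ,
      integral_mul_exp_neg_of_hasSum_cos habs hcos (by omega)]
  have hle : ∀ z ∈ sphere (0 : ℂ) ρ, ‖f (joukowski z) / z ^ (k + 1)‖ ≤ M / ρ ^ (k + 1) := by
    intro z hz
    rw [mem_sphere_zero_iff_norm] at hz
    rw [norm_div, norm_pow, hz]
    gcongr
    exact hbound _ (joukowski_mem_bernsteinRegion (hz ▸ hρ.le) hz.le)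
  have hest : π * ‖a k‖ ≤ π * (2 * M * ρ ^ (-(k : ℤ))) :=
    calc π * ‖a k‖ = ‖∮ z in C(0, ρ), f (joukowski z) / z ^ (k + 1)‖ := by
          rw [hcontour, norm_mul, norm_I, one_mul, norm_mul, norm_real,
            Real.norm_of_nonneg pi_pos.le]
      _ ≤ 2 * π * ρ * (M / ρ ^ (k + 1)) :=
          circleIntegral.norm_integral_le_of_norm_le_const (by linarith) hle
      _ = π * (2 * M * ρ ^ (-(k : ℤ))) := by
          rw [zpow_neg, zpow_natCast, pow_succ]
          field_simp
  exact le_of_mul_le_mul_left hest pi_pos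
end
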